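/- Let (X, π) be a Hausdorff pretopological space and Y a compactification of X (a compact Hausdorff pretopological extension with adh_Y X = Y). Then Y⁺ is PHC: the partial regularization r(Y⁺) is compact. -/

import Mathlib

open Set Filter

/-- A pretopological space: a vicinity filter at each point containing the point. -/
structure Pretop (X : Type*) where
  V : X → Filter X
  pure_le : ∀ x : X, (pure x : Filter X) ≤ V x

/-- Two filters meet (`F # G`). -/
def Meets {X : Type*} (F G : Filter X) : Prop :=
  ∀ A ∈ F, ∀ B ∈ G, (A ∩ B).Nonempty

namespace Pretop

variable {X Y : Type*} (π : Pretop X)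

/-- Convergence: `F → x` iff `F ⊇ V x`. -/
def Conv (F : Filter X) (x : X) : Prop := F ≤ π.V x

/-- Adherence of a filter. -/
def adh (F : Filter X) : Set X := {x | Meets (π.V x) F}

/-- Adherence of a set (adherence of its principal filter). -/
def adhS (A : Set X) : Set X := {x | ∀ U ∈ π.V x, (U ∩ A).Nonempty}

/-- Inherence of a set. -/
def inh (A : Set X) : Set X := (π.adhS Aᶜ)ᶜ

/-- A compact pretopological space: every proper filter has nonempty adherence. -/
def IsCompactPre : Prop := ∀ F : Filter X, F.NeBot → (π.adh F).Nonempty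

/-- Hausdorff: distinct points have disjoint vicinities. -/
def HausdorffPre : Prop :=
  ∀ x y : X, x ≠ y → ∃ U ∈ π.V x, ∃ W ∈ π.V y, U ∩ W = ∅

/-- `F` is compact at `A`: every filter meeting `F` has adherence meeting `A`. -/
def CompactAt (F : Filter X) (A : Set X) : Prop :=
  ∀ G : Filter X, Meets G F → (π.adh G ∩ A).Nonempty

/-- A cover of `A`: every point of `A` has a member of `C` as a vicinity. -/
def IsCover (C : Set (Set X)) (A : Set X) : Prop :=
  ∀ x ∈ A, ∃ U ∈ C, U ∈ π.V x

/-- Cover-compactness. -/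
def CoverCompact (A : Set X) : Prop :=
  ∀ C : Set (Set X), π.IsCover C A →
    ∃ D : Finset (Set X), ↑D ⊆ C ∧ A ⊆ π.inh (⋃ U ∈ D, U)

lemma mem_of_vicinity {x : X} {U : Set X} (h : U ∈ π.V x) : x ∈ U := π.pure_le x h

lemma subset_adhS (A : Set X) : A ⊆ π.adhS A :=
  fun x hx U hU => ⟨x, π.mem_of_vicinity hU, hx⟩

lemma adhS_mono {A B : Set X} (h : A ⊆ B) : π.adhS A ⊆ π.adhS B :=
  fun x hx U hU => (hx U hU).imp fun y hy => ⟨hy.1, h hy.2⟩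

lemma adhS_empty : π.adhS (∅ : Set X) = ∅ := by
  ext x
  simp only [adhS, mem_setOf_eq, Set.inter_empty, Set.mem_empty_iff_false, iff_false]
  intro h
  simpa using h univ univ_mem

lemma adhS_union (A B : Set X) : π.adhS (A ∪ B) = π.adhS A ∪ π.adhS B := by
  apply Subset.antisymm
  · intro x hx
    by_contra hc
    simp only [Set.mem_union, not_or] at hc
    obtain ⟨h1, h2⟩ := hc
    simp only [adhS, mem_setOf_eq, not_forall] at h1 h2
    obtain ⟨U, hU, hUA⟩ := h1
    obtain ⟨W, hW, hWB⟩ := h2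
    obtain ⟨z, hz⟩ := hx (U ∩ W) (inter_mem hU hW)
    rcases hz.2 with hA | hB
    · exact hUA ⟨z, hz.1.1, hA⟩
    · exact hWB ⟨z, hz.1.2, hB⟩
  · exact Set.union_subset (π.adhS_mono Set.subset_union_left)
      (π.adhS_mono Set.subset_union_right)

lemma inh_mono {A B : Set X} (h : A ⊆ B) : π.inh A ⊆ π.inh B :=
  Set.compl_subset_compl.mpr (π.adhS_mono (Set.compl_subset_compl.mpr h))

lemma inh_inter (A B : Set X) : π.inh (A ∩ B) = π.inh A ∩ π.inh B := by
  simp only [inh, Set.compl_inter, adhS_union, Set.compl_union]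

lemma inh_univ : π.inh (univ : Set X) = univ := by
  simp [inh, adhS_empty]

lemma inh_subset (A : Set X) : π.inh A ⊆ A := by
  intro x hx
  by_contra hxA
  exact hx (π.subset_adhS Aᶜ hxA)

/-- The filter `F¹` of members of `F` whose inherence also belongs to `F`. -/
def F1 (F : Filter X) : Filter X where
  sets := {A | A ∈ F ∧ π.inh A ∈ F}
  univ_sets := ⟨univ_mem, by rw [π.inh_univ]; exact univ_mem⟩
  sets_of_superset := fun hA hAB =>
    ⟨mem_of_superset hA.1 hAB, mem_of_superset hA.2 (π.inh_mono hAB)⟩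
  inter_sets := fun hA hB =>
    ⟨inter_mem hA.1 hB.1, by rw [π.inh_inter]; exact inter_mem hA.2 hB.2⟩

lemma mem_F1 {F : Filter X} {A : Set X} : A ∈ π.F1 F ↔ A ∈ F ∧ π.inh A ∈ F := Iff.rfl

/-- The partial regularization `rπ`: vicinities generated by adherences of vicinities. -/
def rpre : Pretop X where
  V x := (π.V x).lift' π.adhS
  pure_le x := le_lift'.mpr fun U hU =>
    mem_pure.mpr (π.subset_adhS U (π.mem_of_vicinity hU))

lemma mem_rpre {x : X} {A : Set X} :
    A ∈ (π.rpre).V x ↔ ∃ U ∈ π.V x, π.adhS U ⊆ A :=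
  mem_lift'_sets fun _ _ h => π.adhS_mono h

end Pretop

/-- Continuity of maps between pretopological spaces. -/
def ContPre {X Y : Type*} (π : Pretop X) (τ : Pretop Y) (f : X → Y) : Prop :=
  ∀ x : X, ∀ W ∈ τ.V (f x), ∃ U ∈ π.V x, f '' U ⊆ W

/-- Perfect maps between pretopological spaces. -/
def PerfectPre {X Y : Type*} (π : Pretop X) (τ : Pretop Y) (f : X → Y) : Prop :=
  ∀ (F : Filter Y) (y : Y), τ.Conv F y → π.CompactAt (F.comap f) (f ⁻¹' {y})

/-- The filter of vicinities of a set `A`. -/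
def VSet {X : Type*} (π : Pretop X) (A : Set X) : Filter X where
  sets := {V | A ⊆ π.inh V}
  univ_sets := by simp [π.inh_univ]
  sets_of_superset := fun h hsub => h.trans (π.inh_mono hsub)
  inter_sets := fun h1 h2 => by
    rw [Set.mem_setOf_eq, π.inh_inter]; exact Set.subset_inter h1 h2

lemma mem_VSet {X : Type*} {π : Pretop X} {A V : Set X} :
    V ∈ VSet π A ↔ A ⊆ π.inh V := Iff.rfl

/-- `f^#[A] = {y : f⁻¹(y) ⊆ A}`. -/
def fsharp {X Y : Type*} (f : X → Y) (A : Set X) : Set Y := {y | f ⁻¹' {y} ⊆ A}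

/-- The θ-quotient pretopology on `Y`. -/
def thetaQuot {X Y : Type*} (π : Pretop X) (f : X → Y) : Pretop Y where
  V y := (VSet π (f ⁻¹' {y})).lift' (fsharp f)
  pure_le y := le_lift'.mpr fun V hV =>
    mem_pure.mpr (fun x hx => π.inh_subset V ((mem_VSet.mp hV) hx))

/-- Strong irreducibility. -/
def StronglyIrreducible {X Y : Type*} (π : Pretop X) (f : X → Y) : Prop :=
  ∀ U V : Set X, (π.inh U).Nonempty → (π.inh V).Nonempty → (U ∩ V).Nonempty →
    ∃ y : Y, f ⁻¹' {y} ⊆ U ∩ V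

/-- The simple extension `Y⁺` determined by a dense subset `S`. -/
def extPlus {X : Type*} (ρ : Pretop X) (S : Set X) : Pretop X where
  V p := (ρ.V p).lift' (fun W => insert p (W ∩ S))
  pure_le p := le_lift'.mpr fun W _ => mem_pure.mpr (Set.mem_insert p _)

/-- `o(A) = {p : ∃ W ∈ V(p), W ∩ S = A}`. -/
def oSet {X : Type*} (ρ : Pretop X) (S : Set X) (A : Set X) : Set X :=
  {p | ∃ W ∈ ρ.V p, W ∩ S = A}

/-- The strict extension `Y^#` determined by a dense subset `S`. -/
def extSharp {X : Type*} (ρ : Pretop X) (S : Set X) : Pretop X where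
  V p := (ρ.V p).lift' (fun W => oSet ρ S (W ∩ S))
  pure_le p := le_lift'.mpr fun W hW => mem_pure.mpr ⟨W, hW, rfl⟩

/-- The θ-pretopology of a topological space: vicinities are closed neighborhoods. -/
def theta (X : Type*) [TopologicalSpace X] : Pretop X where
  V x := (nhds x).lift' closure
  pure_le x := le_lift'.mpr fun U hU =>
    mem_pure.mpr (subset_closure (mem_of_mem_nhds hU))

/-!
Push a proper filter `F` forward along the vicinities of `Y`: `F.bind ρ.V` consists of the sets
that are vicinities of `F`-almost every point. By density its trace on `S` is proper, so
compactness of `Y` yields an adherent point `p`. For a vicinity `W` of `p`, were `adh_Y (W ∩ S)`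
disjoint from a member of `F`, then `(W ∩ S)ᶜ` would lie in `F.bind ρ.V`, and its trace on `S`
would miss `W`. Hence `adh_Y (W ∩ S)`, and with it the larger `adh_{Y⁺} ({p} ∪ (W ∩ S))`, meets
every member of `F`: `p` is adherent to `F` in `r(Y⁺)`.
-/

namespace Pretop

variable {X : Type*} (π : Pretop X)

lemma mem_inh_iff {x : X} {A : Set X} : x ∈ π.inh A ↔ A ∈ π.V x := by
  refine ⟨fun hx => ?_, fun hA hx => ?_⟩
  · by_contra hA
    exact hx fun U hU => not_subset.mp fun hUA => hA (mem_of_superset hU hUA)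
  · obtain ⟨y, hyA, hyAc⟩ := hx A hA
    exact hyAc hyA

lemma inh_compl (A : Set X) : π.inh Aᶜ = (π.adhS A)ᶜ := by
  rw [inh, compl_compl]

lemma mem_bind_V_iff {F : Filter X} {A : Set X} : A ∈ F.bind π.V ↔ π.inh A ∈ F := by
  rw [mem_bind', show π.inh A = {x | A ∈ π.V x} from ext fun _ => π.mem_inh_iff]

lemma bind_V_inf_principal_neBot {F : Filter X} [F.NeBot] {S : Set X}
    (hdense : π.adhS S = univ) : (F.bind π.V ⊓ 𝓟 S).NeBot := by
  refine inf_principal_neBot_iff.mpr fun A hA => ?_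
  obtain ⟨x, hx⟩ := Filter.nonempty_of_mem (π.mem_bind_V_iff.mp hA)
  exact (hdense ▸ mem_univ x : x ∈ π.adhS S) A (π.mem_inh_iff.mp hx)

end Pretop

section extPlus

variable {X : Type*} (ρ : Pretop X) (S : Set X)

lemma mem_extPlus_V_iff {p : X} {A : Set X} :
    A ∈ (extPlus ρ S).V p ↔ ∃ W ∈ ρ.V p, insert p (W ∩ S) ⊆ A :=
  mem_lift'_sets fun _ _ h => insert_subset_insert (inter_subset_inter_left S h)

lemma adhS_subset_extPlus_adhS {U : Set X} (hU : U ⊆ S) :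
    ρ.adhS U ⊆ (extPlus ρ S).adhS U := by
  intro b hb A hA
  obtain ⟨W, hW, hWA⟩ := (mem_extPlus_V_iff ρ S).mp hA
  obtain ⟨x, hxW, hxU⟩ := hb W hW
  exact ⟨x, hWA (mem_insert_of_mem b ⟨hxW, hU hxU⟩), hxU⟩

lemma exists_adhS_subset_of_mem_rpre_extPlus {p : X} {A : Set X}
    (hA : A ∈ (extPlus ρ S).rpre.V p) : ∃ W ∈ ρ.V p, ρ.adhS (W ∩ S) ⊆ A := by
  obtain ⟨U, hU, hUA⟩ := (Pretop.mem_rpre _).mp hA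
  obtain ⟨W, hW, hWU⟩ := (mem_extPlus_V_iff ρ S).mp hU
  refine ⟨W, hW, ?_⟩
  calc ρ.adhS (W ∩ S) ⊆ (extPlus ρ S).adhS (W ∩ S) :=
        adhS_subset_extPlus_adhS ρ S inter_subset_right
    _ ⊆ (extPlus ρ S).adhS U := (extPlus ρ S).adhS_mono ((subset_insert p _).trans hWU)
    _ ⊆ A := hUA

lemma mem_rpre_extPlus_adh_of_mem_adh_bind {F : Filter X} {p : X}
    (hp : p ∈ ρ.adh (F.bind ρ.V ⊓ 𝓟 S)) : p ∈ (extPlus ρ S).rpre.adh F := by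
  intro A hA B hB
  obtain ⟨W, hW, hWA⟩ := exists_adhS_subset_of_mem_rpre_extPlus ρ S hA
  by_contra hAB
  have hB_inh : B ⊆ ρ.inh (W ∩ S)ᶜ := by
    rw [ρ.inh_compl]
    exact fun b hb hbW => hAB ⟨b, hWA hbW, hb⟩
  have hcompl : (W ∩ S)ᶜ ∩ S ∈ F.bind ρ.V ⊓ 𝓟 S :=
    inter_mem_inf (ρ.mem_bind_V_iff.mpr (mem_of_superset hB hB_inh)) (mem_principal_self S)
  obtain ⟨x, hxW, hxWS, hxS⟩ := hp W hW _ hcompl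
  exact hxWS ⟨hxW, hxS⟩

end extPlus

theorem extPlus_phc_general {X : Type*} (ρ : Pretop X) (S : Set X)
    (hdense : ρ.adhS S = Set.univ)
    (hc : ρ.IsCompactPre) :
    ((extPlus ρ S).rpre).IsCompactPre := by
  intro F hF
  obtain ⟨p, hp⟩ := hc _ (ρ.bind_V_inf_principal_neBot (F := F) hdense)
  exact ⟨p, mem_rpre_extPlus_adh_of_mem_adh_bind ρ S hp⟩

/-- If `Y` is a compactification of a Hausdorff pretopological space `X` (here `X` is a
dense subset `S` of the compact Hausdorff pretopological space `Y`), then the simple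
extension `Y⁺` is PHC: its partial regularization is compact. -/
theorem extPlus_phc {X : Type*} (ρ : Pretop X) (S : Set X)
    (hdense : ρ.adhS S = Set.univ)
    (hc : ρ.IsCompactPre) (hH : ρ.HausdorffPre) :
    ((extPlus ρ S).rpre).IsCompactPre :=
  extPlus_phc_general ρ S hdense hc
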